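/- Let P be the orthogonal projection of L²(S¹) onto the Hardy space H² (the closed span of {e_n : n ≥ 0} in the trigonometric basis), and let u₀(z) = z be the standard unitary in C(S¹). Then the Toeplitz operator T_{u₀} = P·M_{u₀}·P, viewed as an operator on H², is a Fredholm operator of index -1. -/

import Mathlib

/-!
Testing `M` against the coordinate functionals on the dense span of the basis shows that it is the
bilateral shift `(M x) n = x (n - 1)`, and `H²` consists of the sequences vanishing at negative
indices. So `M` preserves `H²`, where `P` acts as the identity, and `T` is the unilateral shift: an
isometry whose range is the kernel of the coordinate functional `x ↦ x 0`, a closed subspace of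
codimension one.
-/

open scoped ENNReal

/-- The standard orthonormal basis vector `e_n` of `ℓ²(ℤ)`; under the Fourier identification
`L²(S¹) ≅ ℓ²(ℤ)` it corresponds to `e_n(θ) = e^{2πinθ}`. -/
noncomputable def eBasis (n : ℤ) : lp (fun _ : ℤ => ℂ) 2 := lp.single 2 n (1 : ℂ)

/-- The Hardy space `H²`: the closed span of `{e_n : n ≥ 0}` in `ℓ²(ℤ) ≅ L²(S¹)`. -/
noncomputable def hardySubmodule : Submodule ℂ (lp (fun _ : ℤ => ℂ) 2) :=
  (Submodule.span ℂ {x | ∃ n : ℤ, 0 ≤ n ∧ x = eBasis n}).topologicalClosure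

open scoped lp

theorem Memℓp.comp_equiv {α β E : Type*} [NormedAddCommGroup E] {p : ℝ≥0∞} (hp : 0 < p.toReal)
    {f : α → E} (hf : Memℓp f p) (e : β ≃ α) : Memℓp (f ∘ e) p :=
  memℓp_gen ((e.summable_iff (f := fun i => ‖f i‖ ^ p.toReal)).2 (hf.summable hp))

theorem lp.norm_eq_of_apply_eq_comp_equiv {α β E : Type*} [NormedAddCommGroup E] {p : ℝ≥0∞}
    (hp : 0 < p.toReal) (e : β ≃ α) {x : ℓ^p(α, E)} {y : ℓ^p(β, E)} (h : ∀ i, y i = x (e i)) :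
    ‖y‖ = ‖x‖ := by
  rw [lp.norm_eq_tsum_rpow hp, lp.norm_eq_tsum_rpow hp, ← e.tsum_eq]
  simp only [h]

@[simp]
theorem lp.evalCLM_apply {α 𝕜 : Type*} {E : α → Type*} [NormedRing 𝕜]
    [∀ i, NormedAddCommGroup (E i)] [∀ i, Module 𝕜 (E i)] [∀ i, IsBoundedSMul 𝕜 (E i)]
    {p : ℝ≥0∞} [Fact (1 ≤ p)] (i : α) (f : lp E p) : lp.evalCLM 𝕜 E p i f = f i :=
  rfl

theorem eBasis_apply (n m : ℤ) : eBasis n m = if m = n then 1 else 0 := by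
  simp [eBasis, Pi.single_apply]

theorem topologicalClosure_span_eBasis_image (S : Set ℤ) :
    (Submodule.span ℂ (eBasis '' S)).topologicalClosure =
      ⨅ n ∉ S, (lp.evalCLM ℂ (fun _ : ℤ => ℂ) 2 n).ker := by
  apply le_antisymm
  · refine Submodule.topologicalClosure_minimal _ ?_ ?_
    · rw [Submodule.span_le]
      rintro _ ⟨m, hm, rfl⟩
      simp only [SetLike.mem_coe, Submodule.mem_iInf, LinearMap.mem_ker]
      intro n hn
      simp [eBasis_apply, show n ≠ m by rintro rfl; exact hn hm]
    · simp only [Submodule.coe_iInf]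
      exact isClosed_iInter fun n => isClosed_iInter fun _ => ContinuousLinearMap.isClosed_ker _
  · intro x hx
    simp only [Submodule.mem_iInf, LinearMap.mem_ker] at hx
    rw [← SetLike.mem_coe, Submodule.topologicalClosure_coe]
    refine mem_closure_of_tendsto (lp.hasSum_single ENNReal.ofNat_ne_top x)
      (Filter.Eventually.of_forall fun s => Submodule.sum_mem _ fun i _ => ?_)
    have hsingle : lp.single 2 i (x i) = x i • eBasis i := by
      rw [eBasis, ← lp.single_smul, smul_eq_mul, mul_one]
    rw [hsingle]
    by_cases hi : i ∈ S
    · exact Submodule.smul_mem _ _ (Submodule.subset_span ⟨i, hi, rfl⟩)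
    · rw [show x i = 0 from hx i hi, zero_smul]
      exact Submodule.zero_mem _

theorem mem_hardySubmodule_iff (x : ℓ²(ℤ, ℂ)) : x ∈ hardySubmodule ↔ ∀ n < 0, x n = 0 := by
  have hgen : {x | ∃ n : ℤ, 0 ≤ n ∧ x = eBasis n} = eBasis '' Set.Ici 0 := by
    ext; simp [eq_comm]
  rw [hardySubmodule, hgen, topologicalClosure_span_eBasis_image]
  simp

theorem dense_span_range_eBasis : Dense (Submodule.span ℂ (Set.range eBasis) : Set ℓ²(ℤ, ℂ)) := by
  rw [Submodule.dense_iff_topologicalClosure_eq_top, ← Set.image_univ,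
    topologicalClosure_span_eBasis_image]
  simp

theorem apply_eq_apply_sub_one_of_map_eBasis {M : ℓ²(ℤ, ℂ) →L[ℂ] ℓ²(ℤ, ℂ)}
    (hM : ∀ n, M (eBasis n) = eBasis (n + 1)) (x : ℓ²(ℤ, ℂ)) (n : ℤ) : M x n = x (n - 1) := by
  have hcoord : (lp.evalCLM ℂ (fun _ : ℤ => ℂ) 2 n).comp M = lp.evalCLM ℂ _ 2 (n - 1) := by
    refine ContinuousLinearMap.ext_on dense_span_range_eBasis ?_
    rintro _ ⟨m, rfl⟩
    simp only [ContinuousLinearMap.coe_comp, Function.comp_apply, hM, lp.evalCLM_apply,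
      eBasis_apply]
    congr 1
    exact propext (by omega)
  exact congr($hcoord x)

section UnilateralShift

variable {T : hardySubmodule →L[ℂ] hardySubmodule}

theorem ker_eq_bot_of_unilateral_shift
    (hT : ∀ x n, (T x : ℓ²(ℤ, ℂ)) n = (x : ℓ²(ℤ, ℂ)) (n - 1)) :
    LinearMap.ker (T : hardySubmodule →ₗ[ℂ] hardySubmodule) = ⊥ :=
  LinearMap.ker_eq_bot_of_injective (AddMonoidHomClass.isometry_of_norm T fun x =>
    lp.norm_eq_of_apply_eq_comp_equiv (by norm_num) (Equiv.subRight 1) (hT x)).injective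

theorem range_eq_ker_eval_zero_of_unilateral_shift
    (hT : ∀ x n, (T x : ℓ²(ℤ, ℂ)) n = (x : ℓ²(ℤ, ℂ)) (n - 1)) :
    LinearMap.range (T : hardySubmodule →ₗ[ℂ] hardySubmodule) =
      ((lp.evalCLM ℂ (fun _ : ℤ => ℂ) 2 0).comp hardySubmodule.subtypeL).ker := by
  ext y
  simp only [LinearMap.mem_range, LinearMap.mem_ker, ContinuousLinearMap.coe_coe,
    ContinuousLinearMap.comp_apply, Submodule.subtypeL_apply, lp.evalCLM_apply]
  constructor
  · rintro ⟨x, rfl⟩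
    rw [hT]
    exact (mem_hardySubmodule_iff _).1 x.2 _ (by norm_num)
  · intro hy0
    have hy := (mem_hardySubmodule_iff _).1 y.2
    let x : ℓ²(ℤ, ℂ) := ⟨(y : ℓ²(ℤ, ℂ)) ∘ Equiv.addRight 1, (lp.memℓp _).comp_equiv (by norm_num) _⟩
    have hx : x ∈ hardySubmodule := (mem_hardySubmodule_iff x).2 fun n hn => by
      change (y : ℓ²(ℤ, ℂ)) (n + 1) = 0
      rcases (show n + 1 < 0 ∨ n + 1 = 0 by omega) with hneg | hzero
      · exact hy _ hneg
      · rw [hzero, hy0]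
    refine ⟨⟨x, hx⟩, Subtype.ext (lp.ext (funext fun n => ?_))⟩
    rw [hT]
    exact congrArg (y : ℓ²(ℤ, ℂ)) (sub_add_cancel n 1)

end UnilateralShift

theorem toeplitz_shift_fredholm_index_neg_one_general
    (M P : lp (fun _ : ℤ => ℂ) 2 →L[ℂ] lp (fun _ : ℤ => ℂ) 2)
    (hM : ∀ n : ℤ, M (eBasis n) = eBasis (n + 1))
    -- `P` is the orthogonal projection onto `H²`
    (hPfix : ∀ x ∈ hardySubmodule, P x = x)
    -- the Toeplitz operator `T = P M P` on `H²`
    (T : hardySubmodule →L[ℂ] hardySubmodule)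
    (hT : ∀ x : hardySubmodule, (T x : lp (fun _ : ℤ => ℂ) 2) = P (M x)) :
    IsClosed (LinearMap.range (T : hardySubmodule →ₗ[ℂ] hardySubmodule) :
        Set hardySubmodule) ∧
    Module.finrank ℂ
      (LinearMap.ker (T : hardySubmodule →ₗ[ℂ] hardySubmodule)) = 0 ∧
    FiniteDimensional ℂ
      (hardySubmodule ⧸ LinearMap.range (T : hardySubmodule →ₗ[ℂ] hardySubmodule)) ∧
    Module.finrank ℂ
      (hardySubmodule ⧸ LinearMap.range (T : hardySubmodule →ₗ[ℂ] hardySubmodule)) = 1 ∧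
    (Module.finrank ℂ
        (LinearMap.ker (T : hardySubmodule →ₗ[ℂ] hardySubmodule)) : ℤ) -
      (Module.finrank ℂ
        (hardySubmodule ⧸ LinearMap.range (T : hardySubmodule →ₗ[ℂ] hardySubmodule)) : ℤ)
      = -1 := by
  have hM_shift := apply_eq_apply_sub_one_of_map_eBasis hM
  have hM_hardy : ∀ x ∈ hardySubmodule, M x ∈ hardySubmodule := fun x hx => by
    rw [mem_hardySubmodule_iff] at hx ⊢
    exact fun n hn => (hM_shift x n).trans (hx _ (by omega))
  have hT_shift : ∀ x n, (T x : ℓ²(ℤ, ℂ)) n = (x : ℓ²(ℤ, ℂ)) (n - 1) := fun x n => by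
    rw [hT, hPfix _ (hM_hardy _ x.2), hM_shift]
  set φ := (lp.evalCLM ℂ (fun _ : ℤ => ℂ) 2 0).comp hardySubmodule.subtypeL
  have hφ : Function.Surjective φ := fun c =>
    ⟨c • ⟨eBasis 0, (mem_hardySubmodule_iff _).2 fun n hn => by simp [eBasis_apply, hn.ne]⟩,
      by simp [φ, eBasis_apply]⟩
  have hcoker := LinearMap.quotKerEquivOfSurjective φ.toLinearMap hφ
  rw [range_eq_ker_eval_zero_of_unilateral_shift hT_shift, ker_eq_bot_of_unilateral_shift hT_shift]
  have hrank : Module.finrank ℂ (hardySubmodule ⧸ φ.ker) = 1 := by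
    rw [hcoker.finrank_eq, Module.finrank_self]
  exact ⟨φ.isClosed_ker, finrank_bot ℂ _, .equiv hcoker.symm, hrank,
    by rw [hrank, finrank_bot]; norm_num⟩

/-- Let `P` be the orthogonal projection of `L²(S¹)` onto the Hardy space `H²` and let
`M` be multiplication by the standard unitary `u₀(z) = z`, i.e. `M e_n = e_{n+1}` in the
trigonometric basis.  Then the Toeplitz operator `T_{u₀} = P M P`, viewed as an operator on
`H²`, is Fredholm of index `-1`: it has closed range, trivial (zero-dimensional) kernel, and
finite, one-dimensional cokernel, so `Index(T_{u₀}) = dim ker - dim coker = -1 = -Wind(u₀)`. -/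
theorem toeplitz_shift_fredholm_index_neg_one
    (M P : lp (fun _ : ℤ => ℂ) 2 →L[ℂ] lp (fun _ : ℤ => ℂ) 2)
    (hM : ∀ n : ℤ, M (eBasis n) = eBasis (n + 1))
    -- `P` is the orthogonal projection onto `H²`
    (hPsa : IsSelfAdjoint P)
    (hPidem : ∀ x, P (P x) = P x)
    (hPmem : ∀ x, P x ∈ hardySubmodule)
    (hPfix : ∀ x ∈ hardySubmodule, P x = x)
    -- the Toeplitz operator `T = P M P` on `H²`
    (T : hardySubmodule →L[ℂ] hardySubmodule)
    (hT : ∀ x : hardySubmodule, (T x : lp (fun _ : ℤ => ℂ) 2) = P (M x)) :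
    IsClosed (LinearMap.range (T : hardySubmodule →ₗ[ℂ] hardySubmodule) :
        Set hardySubmodule) ∧
    Module.finrank ℂ
      (LinearMap.ker (T : hardySubmodule →ₗ[ℂ] hardySubmodule)) = 0 ∧
    FiniteDimensional ℂ
      (hardySubmodule ⧸ LinearMap.range (T : hardySubmodule →ₗ[ℂ] hardySubmodule)) ∧
    Module.finrank ℂ
      (hardySubmodule ⧸ LinearMap.range (T : hardySubmodule →ₗ[ℂ] hardySubmodule)) = 1 ∧
    (Module.finrank ℂ
        (LinearMap.ker (T : hardySubmodule →ₗ[ℂ] hardySubmodule)) : ℤ) -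
      (Module.finrank ℂ
        (hardySubmodule ⧸ LinearMap.range (T : hardySubmodule →ₗ[ℂ] hardySubmodule)) : ℤ)
      = -1 :=
  toeplitz_shift_fredholm_index_neg_one_general M P hM hPfix T hT
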